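/- Let A be a real symmetric positive semidefinite p×p matrix with A = A⁺ − A⁻ (entrywise positive and negative parts), b, d, v⁰ ∈ ℝ^p with d, v⁰ nonnegative entrywise, ℓ ∈ ℝ^p with positive entries. Define F(u) = (1/2) uᵀAu + bᵀu + dᵀ|u − v⁰| and G(u, v) = (1/2) ∑_{i,j} (A⁺_{ij} u_i² v_j / v_i − A⁻_{ij} v_i v_j (1 + log(u_i u_j/(v_i v_j)))) + ∑_i (b_i u_i + d_i |u_i − v⁰_i|). Then G(v, v) = F(v) for all strictly positive v, and F(u) ≤ G(u, v) for all strictly positive u, v ∈ [0, ℓ]. -/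

import Mathlib

/-!
Split `A = A⁺ - A⁻` and compare `G` with `F` term by term. For the `A⁺` part, the AM-GM inequality
`2 uᵢ uⱼ ≤ uᵢ² vⱼ / vᵢ + uⱼ² vᵢ / vⱼ` together with the symmetry `A⁺ᵢⱼ = A⁺ⱼᵢ` gives
`uᵀ A⁺ u ≤ ∑ A⁺ᵢⱼ uᵢ² vⱼ / vᵢ`. For the `A⁻` part, `log t ≤ t - 1` with `t = uᵢuⱼ / (vᵢvⱼ)` gives
`vᵢvⱼ (1 + log t) ≤ uᵢuⱼ`. Both bounds are equalities at `u = v`.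
-/

open Finset Real

lemma two_mul_mul_le_sq_mul_div_add_sq_mul_div (a b : ℝ) {c d : ℝ} (hc : 0 < c) (hd : 0 < d) :
    2 * (a * b) ≤ a ^ 2 * d / c + b ^ 2 * c / d := by
  have key : a ^ 2 * d / c + b ^ 2 * c / d - 2 * (a * b) = (a * d - b * c) ^ 2 / (c * d) := by
    field_simp
    ring
  have : 0 ≤ (a * d - b * c) ^ 2 / (c * d) := by positivity
  linarith

lemma mul_one_add_log_div_le {x y : ℝ} (hx : 0 < x) (hy : 0 < y) :
    y * (1 + log (x / y)) ≤ x := by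
  have hlog := log_le_sub_one_of_pos (div_pos hx hy)
  calc y * (1 + log (x / y)) ≤ y * (x / y) := by gcongr; linarith
    _ = x := by field_simp

lemma max_zero_sub_max_zero_neg (x : ℝ) : max 0 x - max 0 (-x) = x := by
  rw [max_comm, max_comm 0]
  exact max_zero_sub_max_neg_zero_eq_self x

section QuadraticMajorizer

variable {ι : Type*} [Fintype ι] {u v : ι → ℝ}

lemma sum_mul_mul_le_sum_mul_sq_mul_div {P : ι → ι → ℝ} (hP_symm : ∀ i j, P i j = P j i)
    (hP_nonneg : ∀ i j, 0 ≤ P i j) (hv : ∀ i, 0 < v i) :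
    ∑ i, ∑ j, P i j * (u i * u j) ≤ ∑ i, ∑ j, P i j * u i ^ 2 * v j / v i := by
  have hswap : ∑ i, ∑ j, P i j * u i ^ 2 * v j / v i = ∑ i, ∑ j, P i j * u j ^ 2 * v i / v j := by
    rw [sum_comm]
    simp_rw [hP_symm]
  have hpair : ∑ i, ∑ j, 2 * (P i j * (u i * u j))
      ≤ ∑ i, ∑ j, (P i j * u i ^ 2 * v j / v i + P i j * u j ^ 2 * v i / v j) := by
    gcongr with i _ j _
    calc 2 * (P i j * (u i * u j)) = P i j * (2 * (u i * u j)) := by ring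
      _ ≤ P i j * (u i ^ 2 * v j / v i + u j ^ 2 * v i / v j) := by
        gcongr
        · exact hP_nonneg i j
        · exact two_mul_mul_le_sq_mul_div_add_sq_mul_div _ _ (hv i) (hv j)
      _ = P i j * u i ^ 2 * v j / v i + P i j * u j ^ 2 * v i / v j := by ring
  simp only [← mul_sum, sum_add_distrib, ← hswap] at hpair
  linarith

lemma sum_mul_one_add_log_le_sum_mul_mul {N : ι → ι → ℝ} (hN_nonneg : ∀ i j, 0 ≤ N i j)
    (hu : ∀ i, 0 < u i) (hv : ∀ i, 0 < v i) :
    ∑ i, ∑ j, N i j * v i * v j * (1 + log (u i * u j / (v i * v j)))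
      ≤ ∑ i, ∑ j, N i j * (u i * u j) := by
  refine sum_le_sum fun i _ => sum_le_sum fun j _ => ?_
  rw [mul_assoc (N i j), mul_assoc (N i j)]
  exact mul_le_mul_of_nonneg_left
    (mul_one_add_log_div_le (mul_pos (hu i) (hu j)) (mul_pos (hv i) (hv j))) (hN_nonneg i j)

/-- The quadratic part of `G`, with `A⁺ᵢⱼ = max 0 Aᵢⱼ` and `A⁻ᵢⱼ = max 0 (-Aᵢⱼ)`. -/
noncomputable def quadraticMajorizer (A : Matrix ι ι ℝ) (u v : ι → ℝ) : ℝ :=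
  ∑ i, ∑ j, (max 0 (A i j) * u i ^ 2 * v j / v i
    - max 0 (-A i j) * v i * v j * (1 + log (u i * u j / (v i * v j))))

variable {A : Matrix ι ι ℝ}

lemma sum_mul_mul_le_quadraticMajorizer (hA : A.IsSymm) (hu : ∀ i, 0 < u i)
    (hv : ∀ i, 0 < v i) :
    ∑ i, ∑ j, u i * A i j * u j ≤ quadraticMajorizer A u v := by
  have hsplit : ∑ i, ∑ j, u i * A i j * u j
      = ∑ i, ∑ j, max 0 (A i j) * (u i * u j) - ∑ i, ∑ j, max 0 (-A i j) * (u i * u j) := by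
    simp only [← sum_sub_distrib, ← sub_mul, max_zero_sub_max_zero_neg]
    exact sum_congr rfl fun i _ => sum_congr rfl fun j _ => by ring
  have hpos := sum_mul_mul_le_sum_mul_sq_mul_div (u := u)
    (fun i j => by rw [hA.apply]) (fun i j => le_max_left 0 (A i j)) hv
  have hneg := sum_mul_one_add_log_le_sum_mul_mul (fun i j => le_max_left 0 (-A i j)) hu hv
  simp only [quadraticMajorizer, sum_sub_distrib]
  linarith

lemma quadraticMajorizer_self (hv : ∀ i, 0 < v i) :
    quadraticMajorizer A v v = ∑ i, ∑ j, v i * A i j * v j := by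
  refine sum_congr rfl fun i _ => sum_congr rfl fun j _ => ?_
  have hcancel : max 0 (A i j) * v i ^ 2 * v j / v i = max 0 (A i j) * (v i * v j) := by
    field_simp
  rw [div_self (mul_pos (hv i) (hv j)).ne', log_one, hcancel]
  linear_combination v i * v j * max_zero_sub_max_zero_neg (A i j)

end QuadraticMajorizer

theorem stmt_9_general (p : ℕ) (A : Matrix (Fin p) (Fin p) ℝ) (hA : A.PosSemidef)
    (b d v0 l : Fin p → ℝ)
    (F : (Fin p → ℝ) → ℝ)
    (hF : ∀ u, F u = (1/2) * (∑ i, ∑ j, u i * A i j * u j)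
      + ∑ i, b i * u i + ∑ i, d i * |u i - v0 i|)
    (G : (Fin p → ℝ) → (Fin p → ℝ) → ℝ)
    (hG : ∀ u v, G u v =
      (1/2) * (∑ i, ∑ j,
        (max 0 (A i j) * (u i)^2 * v j / v i
          - max 0 (-(A i j)) * v i * v j * (1 + Real.log (u i * u j / (v i * v j)))))
      + ∑ i, (b i * u i + d i * |u i - v0 i|)) :
    (∀ v : Fin p → ℝ, (∀ i, 0 < v i) → G v v = F v) ∧
    (∀ u v : Fin p → ℝ, (∀ i, 0 < u i ∧ u i ≤ l i) → (∀ i, 0 < v i ∧ v i ≤ l i) →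
      F u ≤ G u v) := by
  refine ⟨fun v hv => ?_, fun u v hu hv => ?_⟩
  · have hquad := quadraticMajorizer_self (A := A) hv
    rw [quadraticMajorizer] at hquad
    rw [hG, hF, hquad, sum_add_distrib]
    ring
  · have hquad := sum_mul_mul_le_quadraticMajorizer
      (Matrix.isHermitian_iff_isSymm.mp hA.isHermitian) (fun i => (hu i).1) (fun i => (hv i).1)
    rw [quadraticMajorizer] at hquad
    rw [hF, hG, sum_add_distrib]
    linarith

theorem stmt_9 (p : ℕ) (A : Matrix (Fin p) (Fin p) ℝ) (hA : A.PosSemidef)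
    (b d v0 l : Fin p → ℝ) (hd : ∀ i, 0 ≤ d i) (hv0 : ∀ i, 0 ≤ v0 i)
    (hl : ∀ i, 0 < l i)
    (F : (Fin p → ℝ) → ℝ)
    (hF : ∀ u, F u = (1/2) * (∑ i, ∑ j, u i * A i j * u j)
      + ∑ i, b i * u i + ∑ i, d i * |u i - v0 i|)
    (G : (Fin p → ℝ) → (Fin p → ℝ) → ℝ)
    (hG : ∀ u v, G u v =
      (1/2) * (∑ i, ∑ j,
        (max 0 (A i j) * (u i)^2 * v j / v i
          - max 0 (-(A i j)) * v i * v j * (1 + Real.log (u i * u j / (v i * v j)))))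
      + ∑ i, (b i * u i + d i * |u i - v0 i|)) :
    (∀ v : Fin p → ℝ, (∀ i, 0 < v i) → G v v = F v) ∧
    (∀ u v : Fin p → ℝ, (∀ i, 0 < u i ∧ u i ≤ l i) → (∀ i, 0 < v i ∧ v i ≤ l i) →
      F u ≤ G u v) :=
  stmt_9_general p A hA b d v0 l F hF G hG
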